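/- Let B be an (n×1) complex column vector. Then the matrix exponential of the (n+1)×(n+1) skew-Hermitian block matrix [[0, B], [-B†, 0]] equals the block matrix [[cos√(BB†), (sin√(B†B)/√(B†B))·B], [-(sin√(B†B)/√(B†B))·B†, cos√(B†B)]], where B†B is the scalar ‖B‖², √(BB†) is taken via the functional calculus on the positive semidefinite matrix BB†, and sin(x)/x is interpreted as 1 at x = 0. -/

import Mathlib

open Matrix Complex

/-- `cos √M` defined by the entire power series `∑ (-1)^k M^k / (2k)!`,
which agrees with the functional-calculus `cos` of the PSD square root of `M`. -/
noncomputable def cosSqrt {m : Type*} [Fintype m] [DecidableEq m]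
    (M : Matrix m m ℂ) : Matrix m m ℂ :=
  ∑' k : ℕ, ((-1 : ℂ) ^ k / (2 * k).factorial) • M ^ k

/-- `sin x / x`, interpreted as `1` at `x = 0`. -/
noncomputable def sinc (x : ℝ) : ℝ := if x = 0 then 1 else Real.sin x / x

/-
With `A = [[0, B], [C, 0]]` one has `A² = diag(BC, CB)`, hence `A^(2k) = diag((BC)^k, (CB)^k)` and
`A^(2k+1) = [[0, B (CB)^k], [(CB)^k C, 0]]`. Splitting the exponential series of `A` into even and
odd terms expresses `exp A` through the power series `cosh √X` and `sinh √X / √X` evaluated at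
`X = BC` and `X = CB`. For `C = -B†` the `1 × 1` block `CB = -‖B‖²` is a scalar, on which these
series become `cos ‖B‖` and `sinc ‖B‖`.
-/

section Series

variable (𝕂 : Type*) {𝔸 : Type*} [Field 𝕂] [Ring 𝔸] [Algebra 𝕂 𝔸] [TopologicalSpace 𝔸]

/- `coshSqrt 𝕂 x = cosh √x` and `sinhcSqrt 𝕂 x = sinh √x / √x`, as power series in `x` itself,
so that no square root of `x` is needed. -/
noncomputable def coshSqrt (x : 𝔸) : 𝔸 := ∑' k : ℕ, ((2 * k).factorial : 𝕂)⁻¹ • x ^ k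

noncomputable def sinhcSqrt (x : 𝔸) : 𝔸 := ∑' k : ℕ, ((2 * k + 1).factorial : 𝕂)⁻¹ • x ^ k

end Series

section NormedAlgebra

variable {𝕂 𝔸 : Type*} [RCLike 𝕂] [NormedRing 𝔸] [NormedAlgebra 𝕂 𝔸] [CompleteSpace 𝔸]

theorem summable_inv_factorial_smul_pow_of_le {f : ℕ → ℕ} (hf : ∀ k, k ≤ f k) (x : 𝔸) :
    Summable fun k => ((f k).factorial : 𝕂)⁻¹ • x ^ k := by
  refine .of_norm_bounded_eventually_nat (Real.summable_pow_div_factorial ‖x‖) ?_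
  filter_upwards [Filter.eventually_ge_atTop 1] with k hk
  rw [norm_smul, norm_inv, RCLike.norm_natCast, div_eq_inv_mul]
  gcongr
  · exact hf k
  · exact norm_pow_le' x hk

theorem hasSum_coshSqrt (x : 𝔸) :
    HasSum (fun k => ((2 * k).factorial : 𝕂)⁻¹ • x ^ k) (coshSqrt 𝕂 x) :=
  (summable_inv_factorial_smul_pow_of_le (fun k => by omega) x).hasSum

theorem hasSum_sinhcSqrt (x : 𝔸) :
    HasSum (fun k => ((2 * k + 1).factorial : 𝕂)⁻¹ • x ^ k) (sinhcSqrt 𝕂 x) :=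
  (summable_inv_factorial_smul_pow_of_le (fun k => by omega) x).hasSum

end NormedAlgebra

section ScalarArgument

variable {𝕂 𝔸 : Type*} [Field 𝕂] [TopologicalSpace 𝕂] [Ring 𝔸] [Algebra 𝕂 𝔸]
  [TopologicalSpace 𝔸] [ContinuousSMul 𝕂 𝔸] [T2Space 𝔸]

theorem tsum_smul_pow_smul_one {a : ℕ → 𝕂} {c s : 𝕂} (h : HasSum (fun k => a k * c ^ k) s) :
    ∑' k, a k • (c • (1 : 𝔸)) ^ k = s • (1 : 𝔸) := by
  simpa only [smul_pow, one_pow, smul_smul] using (h.smul_const (1 : 𝔸)).tsum_eq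

theorem coshSqrt_smul_one {c s : 𝕂} (h : HasSum (fun k => ((2 * k).factorial : 𝕂)⁻¹ * c ^ k) s) :
    coshSqrt 𝕂 (c • (1 : 𝔸)) = s • 1 :=
  tsum_smul_pow_smul_one h

theorem sinhcSqrt_smul_one {c s : 𝕂}
    (h : HasSum (fun k => ((2 * k + 1).factorial : 𝕂)⁻¹ * c ^ k) s) :
    sinhcSqrt 𝕂 (c • (1 : 𝔸)) = s • 1 :=
  tsum_smul_pow_smul_one h

end ScalarArgument

theorem cosSqrt_eq_coshSqrt_neg {m : Type*} [Fintype m] [DecidableEq m] (M : Matrix m m ℂ) :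
    cosSqrt M = coshSqrt ℂ (-M) := by
  refine tsum_congr fun k => ?_
  rw [← neg_one_smul ℂ M, smul_pow, smul_smul, div_eq_inv_mul]

theorem Real.hasSum_cos_neg_sq_pow (x : ℝ) :
    HasSum (fun k => ((2 * k).factorial : ℝ)⁻¹ * (-x ^ 2) ^ k) (Real.cos x) := by
  refine (Real.hasSum_cos x).congr_fun fun k => ?_
  rw [neg_pow, ← pow_mul]
  ring

theorem hasSum_sinc_neg_sq_pow (x : ℝ) :
    HasSum (fun k => ((2 * k + 1).factorial : ℝ)⁻¹ * (-x ^ 2) ^ k) (sinc x) := by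
  rcases eq_or_ne x 0 with rfl | hx
  · rw [sinc, if_pos rfl]
    convert hasSum_ite_eq 0 (1 : ℝ) using 2 with k
    rcases k with _ | k <;> simp
  · rw [sinc, if_neg hx]
    refine ((Real.hasSum_sin x).div_const x).congr_fun fun k => ?_
    rw [neg_pow, ← pow_mul, pow_succ]
    field_simp

section Topology

variable {ι l m n o R : Type*} [TopologicalSpace R]

theorem HasSum.matrix_fromBlocks [AddCommMonoid R] {f : ι → Matrix n l R}
    {g : ι → Matrix n m R} {h : ι → Matrix o l R} {i : ι → Matrix o m R} {a b c d}
    (hf : HasSum f a) (hg : HasSum g b) (hh : HasSum h c) (hi : HasSum i d) :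
    HasSum (fun x => fromBlocks (f x) (g x) (h x) (i x)) (fromBlocks a b c d) := by
  refine Pi.hasSum.2 fun r => Pi.hasSum.2 fun s => ?_
  rcases r with r | r <;> rcases s with s | s
  · exact Pi.hasSum.1 (Pi.hasSum.1 hf r) s
  · exact Pi.hasSum.1 (Pi.hasSum.1 hg r) s
  · exact Pi.hasSum.1 (Pi.hasSum.1 hh r) s
  · exact Pi.hasSum.1 (Pi.hasSum.1 hi r) s

variable [Fintype m] [NonUnitalNonAssocSemiring R] [IsTopologicalSemiring R]

theorem HasSum.matrix_mul_left {f : ι → Matrix m n R} {a : Matrix m n R} (B : Matrix l m R)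
    (hf : HasSum f a) : HasSum (fun x => B * f x) (B * a) :=
  hf.map (addMonoidHomMulLeft B) (continuous_const.matrix_mul continuous_id)

theorem HasSum.matrix_mul_right {f : ι → Matrix l m R} {a : Matrix l m R} (C : Matrix m n R)
    (hf : HasSum f a) : HasSum (fun x => f x * C) (a * C) :=
  hf.map (addMonoidHomMulRight C) (continuous_id.matrix_mul continuous_const)

end Topology

section Powers

variable {m n R : Type*} [Fintype m] [Fintype n] [DecidableEq m] [DecidableEq n] [Semiring R]

theorem Matrix.mul_pow_mul (B : Matrix m n R) (C : Matrix n m R) (k : ℕ) :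
    (B * C) ^ k * B = B * (C * B) ^ k := by
  induction k with
  | zero => simp
  | succ k ih => simp only [pow_succ', Matrix.mul_assoc, ih]

theorem Matrix.fromBlocks_zero_zero_pow_two_mul (B : Matrix m n R) (C : Matrix n m R) (k : ℕ) :
    fromBlocks 0 B C 0 ^ (2 * k) = fromBlocks ((B * C) ^ k) 0 0 ((C * B) ^ k) := by
  simp [pow_mul, sq, fromBlocks_multiply, fromBlocks_diagonal_pow]

theorem Matrix.fromBlocks_zero_zero_pow_two_mul_add_one (B : Matrix m n R) (C : Matrix n m R)
    (k : ℕ) : fromBlocks 0 B C 0 ^ (2 * k + 1) =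
      fromBlocks 0 (B * (C * B) ^ k) ((C * B) ^ k * C) 0 := by
  rw [pow_succ, fromBlocks_zero_zero_pow_two_mul, fromBlocks_multiply, mul_pow_mul]
  simp

end Powers

section Exponential

attribute [local instance] Matrix.linftyOpNormedRing Matrix.linftyOpNormedAlgebra

variable {𝕂 m n : Type*} [RCLike 𝕂] [Fintype m] [Fintype n] [DecidableEq m] [DecidableEq n]

theorem Matrix.exp_fromBlocks_zero_zero (B : Matrix m n 𝕂) (C : Matrix n m 𝕂) :
    NormedSpace.exp (fromBlocks 0 B C 0) =
      fromBlocks (coshSqrt 𝕂 (B * C)) (B * sinhcSqrt 𝕂 (C * B))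
        (sinhcSqrt 𝕂 (C * B) * C) (coshSqrt 𝕂 (C * B)) := by
  set A := fromBlocks 0 B C 0
  have heven : HasSum (fun k => ((2 * k).factorial : 𝕂)⁻¹ • A ^ (2 * k))
      (fromBlocks (coshSqrt 𝕂 (B * C)) 0 0 (coshSqrt 𝕂 (C * B))) := by
    simp only [A, fromBlocks_zero_zero_pow_two_mul, fromBlocks_smul, smul_zero]
    exact (hasSum_coshSqrt (B * C)).matrix_fromBlocks hasSum_zero hasSum_zero
      (hasSum_coshSqrt (C * B))
  have hodd : HasSum (fun k => ((2 * k + 1).factorial : 𝕂)⁻¹ • A ^ (2 * k + 1))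
      (fromBlocks 0 (B * sinhcSqrt 𝕂 (C * B)) (sinhcSqrt 𝕂 (C * B) * C) 0) := by
    -- the ascription puts the powers in `Matrix`'s own ring structure, not the local normed one
    have h : HasSum (fun k => ((2 * k + 1).factorial : 𝕂)⁻¹ • (C * B) ^ k)
        (sinhcSqrt 𝕂 (C * B)) :=
      hasSum_sinhcSqrt (C * B)
    simp only [A, fromBlocks_zero_zero_pow_two_mul_add_one, fromBlocks_smul, smul_zero]
    refine hasSum_zero.matrix_fromBlocks ?_ ?_ hasSum_zero
    · simpa only [Matrix.mul_smul] using h.matrix_mul_left B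
    · simpa only [Matrix.smul_mul] using h.matrix_mul_right C
  have hsum := HasSum.even_add_odd (f := fun k => (k.factorial : 𝕂)⁻¹ • A ^ k) heven hodd
  rw [fromBlocks_add, add_zero, add_zero, zero_add, zero_add] at hsum
  rw [NormedSpace.exp_eq_tsum 𝕂]
  exact hsum.tsum_eq

end Exponential

open ComplexOrder in
theorem Matrix.conjTranspose_mul_self_eq_sqrt_sq_smul_one {m : Type*} [Fintype m]
    (B : Matrix m (Fin 1) ℂ) :
    Bᴴ * B = ((√((Bᴴ * B) 0 0).re : ℝ) : ℂ) ^ 2 • 1 := by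
  have hnn : 0 ≤ (Bᴴ * B) 0 0 := (posSemidef_conjTranspose_mul_self B).diag_nonneg
  rw [← ofReal_pow, Real.sq_sqrt (Complex.nonneg_iff.1 hnn).1,
    ← Complex.eq_re_of_ofReal_le (by rwa [ofReal_zero])]
  ext i j
  fin_cases i; fin_cases j
  simp

/-- The matrix exponential of the skew-Hermitian block matrix `[[0, B], [-B†, 0]]`,
for a column vector `B` with `b = √(B†B) = ‖B‖`, equals
`[[cos √(BB†), (sin b / b)·B], [-(sin b / b)·B†, cos b]]`. -/
theorem exp_skew_block (n : ℕ) (B : Matrix (Fin n) (Fin 1) ℂ)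
    (b : ℝ) (hb : b = Real.sqrt (((Bᴴ * B) 0 0).re)) :
    NormedSpace.exp (Matrix.fromBlocks 0 B (-Bᴴ) 0) =
      Matrix.fromBlocks (cosSqrt (B * Bᴴ)) ((sinc b : ℂ) • B)
        (-((sinc b : ℂ) • Bᴴ)) ((Real.cos b : ℂ) • 1) := by
  have hBB : Bᴴ * B = (b : ℂ) ^ 2 • 1 := hb ▸ conjTranspose_mul_self_eq_sqrt_sq_smul_one B
  have hcos : HasSum (fun k => ((2 * k).factorial : ℂ)⁻¹ * (-(b : ℂ) ^ 2) ^ k) (Real.cos b) := by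
    refine (Complex.hasSum_ofReal.2 (Real.hasSum_cos_neg_sq_pow b)).congr_fun fun k => ?_
    push_cast
    rfl
  have hsinc : HasSum (fun k => ((2 * k + 1).factorial : ℂ)⁻¹ * (-(b : ℂ) ^ 2) ^ k) (sinc b) := by
    refine (Complex.hasSum_ofReal.2 (hasSum_sinc_neg_sq_pow b)).congr_fun fun k => ?_
    push_cast
    rfl
  rw [exp_fromBlocks_zero_zero, Matrix.mul_neg, Matrix.neg_mul, hBB, ← neg_smul,
    ← cosSqrt_eq_coshSqrt_neg, coshSqrt_smul_one hcos, sinhcSqrt_smul_one hsinc]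
  simp
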